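/- Let (S,*,q) be a symmetric composition algebra over a field of characteristic ≠ 2. Then for any x,y ∈ S, the triple t_{x,y} = (σ_{x,y}, ½q(x,y)id − r_x l_y, ½q(x,y)id − l_x r_y) belongs to tri(S,*,q) = {(d₀,d₁,d₂) ∈ o(S,q)³ : d₀(u*v) = d₁(u)*v + u*d₂(v) for all u,v ∈ S}, where σ_{x,y}(z) = q(x,z)y − q(y,z)x, l_x(z) = x*z, r_x(z) = z*x. -/
import Mathlib


/-- `σ_{x,y}(z) = q(x,z)y − q(y,z)x` (with `q(·,·)` the polar form of `q`). -/
def tComp0 {F : Type*} [Field F] {S : Type*} [AddCommGroup S] [Module F S]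
    (q : QuadraticForm F S) (x y z : S) : S :=
  QuadraticMap.polar q x z • y - QuadraticMap.polar q y z • x

/-- `(½ q(x,y)) id − r_x l_y : z ↦ ½ q(x,y) z − (y*z)*x`. -/
def tComp1 {F : Type*} [Field F] {S : Type*} [AddCommGroup S] [Module F S]
    (q : QuadraticForm F S) (mul : S →ₗ[F] S →ₗ[F] S) (x y z : S) : S :=
  ((2 : F)⁻¹ * QuadraticMap.polar q x y) • z - mul (mul y z) x

/-- `(½ q(x,y)) id − l_x r_y : z ↦ ½ q(x,y) z − x*(z*y)`. -/
def tComp2 {F : Type*} [Field F] {S : Type*} [AddCommGroup S] [Module F S]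
    (q : QuadraticForm F S) (mul : S →ₗ[F] S →ₗ[F] S) (x y z : S) : S :=
  ((2 : F)⁻¹ * QuadraticMap.polar q x y) • z - mul x (mul z y)

section Aux

open QuadraticMap

variable {F : Type*} [Field F] {S : Type*} [AddCommGroup S] [Module F S]
variable (mul : S →ₗ[F] S →ₗ[F] S) (q : QuadraticForm F S)

lemma scaleL (hcomp : ∀ x y : S, q (mul x y) = q x * q y) (x b d : S) :
    polar q (mul x b) (mul x d) = q x * polar q b d := by
  have h : mul x b + mul x d = mul x (b + d) := (map_add (mul x) b d).symm
  simp only [QuadraticMap.polar, h, hcomp]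
  ring

lemma lincomp (hcomp : ∀ x y : S, q (mul x y) = q x * q y) (a b c d : S) :
    polar q (mul a b) (mul c d) + polar q (mul c b) (mul a d)
      = polar q a c * polar q b d := by
  have h := scaleL mul q hcomp (a + c) b d
  have h2 := scaleL mul q hcomp a b d
  have h3 := scaleL mul q hcomp c b d
  have hq : q (a + c) = polar q a c + q a + q c := by
    simp [QuadraticMap.polar]; ring
  simp only [map_add, LinearMap.add_apply, polar_add_left, polar_add_right, hq] at h
  linear_combination h - h2 - h3

lemma keyL (hreg : ∀ x : S, (∀ y : S, polar q x y = 0) → x = 0)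
    (hcomp : ∀ x y : S, q (mul x y) = q x * q y)
    (hassoc : ∀ x y z : S, polar q (mul x y) z = polar q x (mul y z))
    (a b c : S) :
    mul (mul a b) c + mul (mul c b) a = polar q a c • b := by
  have hz : ∀ z, polar q (mul (mul a b) c + mul (mul c b) a - polar q a c • b) z = 0 := by
    intro z
    have h := lincomp mul q hcomp a b c z
    simp only [polar_sub_left, polar_add_left, polar_smul_left, smul_eq_mul]
    rw [hassoc (mul a b) c z, hassoc (mul c b) a z]
    linear_combination h
  have := hreg _ hz
  exact sub_eq_zero.mp this

lemma keyR (hreg : ∀ x : S, (∀ y : S, polar q x y = 0) → x = 0)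
    (hcomp : ∀ x y : S, q (mul x y) = q x * q y)
    (hassoc : ∀ x y z : S, polar q (mul x y) z = polar q x (mul y z))
    (a b c : S) :
    mul a (mul b c) + mul c (mul b a) = polar q a c • b := by
  have hz : ∀ z, polar q (mul a (mul b c) + mul c (mul b a) - polar q a c • b) z = 0 := by
    intro z
    have h := lincomp mul q hcomp z a b c
    have e1 : polar q (mul a (mul b c)) z = polar q (mul z a) (mul b c) := by
      rw [polar_comm, ← hassoc]
    have e2 : polar q (mul c (mul b a)) z = polar q (mul b a) (mul z c) := by
      rw [polar_comm, polar_comm q (mul b a) (mul z c), ← hassoc]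
    have e3 : polar q (polar q a c • b) z = polar q a c * polar q z b := by
      rw [polar_smul_left, polar_comm q b z, smul_eq_mul]
    simp only [polar_sub_left, polar_add_left, e1, e2, e3]
    linear_combination h
  have := hreg _ hz
  exact sub_eq_zero.mp this

end Aux

/-- For a symmetric composition algebra `(S,*,q)` over a field of characteristic
`≠ 2`, the triple `t_{x,y} = (σ_{x,y}, ½q(x,y)id − r_x l_y, ½q(x,y)id − l_x r_y)`
belongs to `tri(S,*,q)`: each component is in `o(S,q)` and
`d₀(u*v) = d₁(u)*v + u*d₂(v)`. -/
theorem stmt19 (F : Type*) [Field F] (hchar : (2 : F) ≠ 0)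
    (S : Type*) [AddCommGroup S] [Module F S]
    (mul : S →ₗ[F] S →ₗ[F] S) (q : QuadraticForm F S)
    (hreg : ∀ x : S, (∀ y : S, QuadraticMap.polar q x y = 0) → x = 0)
    (hcomp : ∀ x y : S, q (mul x y) = q x * q y)
    (hassoc : ∀ x y z : S,
      QuadraticMap.polar q (mul x y) z = QuadraticMap.polar q x (mul y z)) :
    ∀ x y : S,
      (∀ u v : S, QuadraticMap.polar q (tComp0 q x y u) v
          + QuadraticMap.polar q u (tComp0 q x y v) = 0) ∧
      (∀ u v : S, QuadraticMap.polar q (tComp1 q mul x y u) v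
          + QuadraticMap.polar q u (tComp1 q mul x y v) = 0) ∧
      (∀ u v : S, QuadraticMap.polar q (tComp2 q mul x y u) v
          + QuadraticMap.polar q u (tComp2 q mul x y v) = 0) ∧
      (∀ u v : S, tComp0 q x y (mul u v)
          = mul (tComp1 q mul x y u) v + mul u (tComp2 q mul x y v)) := by
  open QuadraticMap in
  intro x y
  refine ⟨?_, ?_, ?_, ?_⟩
  · intro u v
    simp only [tComp0, polar_sub_left, polar_sub_right, polar_smul_left, polar_smul_right,
      smul_eq_mul]
    rw [polar_comm q u x, polar_comm q u y]
    ring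
  · intro u v
    simp only [tComp1, polar_sub_left, polar_sub_right, polar_smul_left, polar_smul_right,
      smul_eq_mul]
    have e1 : polar q (mul (mul y u) x) v = polar q (mul y u) (mul x v) := hassoc _ _ _
    have e2 : polar q u (mul (mul y v) x) = polar q (mul y v) (mul x u) := by
      rw [polar_comm, hassoc]
    have h := lincomp mul q hcomp y u x v
    rw [polar_comm q y x, polar_comm q (mul x u) (mul y v)] at h
    rw [e1, e2]
    linear_combination -h + polar q x y * polar q u v * inv_mul_cancel₀ hchar
  · intro u v
    simp only [tComp2, polar_sub_left, polar_sub_right, polar_smul_left, polar_smul_right,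
      smul_eq_mul]
    have e1 : polar q (mul x (mul u y)) v = polar q (mul v x) (mul u y) := by
      rw [polar_comm, ← hassoc]
    have e2 : polar q u (mul x (mul v y)) = polar q (mul u x) (mul v y) :=
      (hassoc u x (mul v y)).symm
    have h := lincomp mul q hcomp v x u y
    rw [polar_comm q v u] at h
    rw [e1, e2]
    linear_combination -h + polar q x y * polar q u v * inv_mul_cancel₀ hchar
  · intro u v
    -- key rewrites
    have h1 := keyL mul q hreg hcomp hassoc (mul y u) x v
    -- ((y*u)*x)*v + (v*x)*(y*u) = ⟪y*u, v⟫ • x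
    have h2 := keyR mul q hreg hcomp hassoc (mul v x) y u
    -- (v*x)*(y*u) + u*(y*(v*x)) = ⟪v*x, u⟫ • y
    have h3 := keyR mul q hreg hcomp hassoc y v x
    -- y*(v*x) + x*(v*y) = ⟪y, x⟫ • v
    have p1 : polar q (mul y u) v = polar q y (mul u v) := hassoc _ _ _
    have p2 : polar q (mul v x) u = polar q x (mul u v) := by
      rw [polar_comm q (mul v x) u, ← hassoc u v x, polar_comm q (mul u v) x]
    simp only [tComp0, tComp1, tComp2, _root_.map_sub, _root_.map_smul,
      LinearMap.sub_apply, LinearMap.smul_apply]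
    rw [p1] at h1
    rw [p2] at h2
    -- from h3 : y*(v*x) = ⟪y,x⟫•v - x*(v*y)
    have h3' : mul y (mul v x) = polar q y x • v - mul x (mul v y) := by
      linear_combination (norm := module) h3
    rw [h3', _root_.map_sub, _root_.map_smul] at h2
    have hyx : polar q y x = polar q x y := polar_comm q y x
    rw [hyx] at h2
    have hp : (2 : F)⁻¹ * polar q x y * 2 = polar q x y := by
      linear_combination polar q x y * inv_mul_cancel₀ hchar
    linear_combination (norm := module) h1 - h2 - hp • (mul u v)
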